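/- Let (E,d) be a geodesic metric space and let x : [0,1] → E be α-Hölder with constant ‖x‖_{α-Höl} = sup_{s<t} d(x_s,x_t)/|t-s|^α. Given a dissection D = {0 = t₀ < t₁ < ... < t_n = 1}, let x^D be the path obtained by connecting the points x_{t_i} by constant-speed geodesics on each interval [t_i, t_{i+1}]. Then ‖x^D‖_{α-Höl} ≤ 3 ‖x‖_{α-Höl}. -/
import Mathlib


/-- Geodesic (piecewise constant-speed-geodesic) approximation of an α-Hölder
path along a dissection is α-Hölder with at most three times the constant. -/
theorem geodesic_approx_holder {E : Type*} [MetricSpace E]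
    (α M : ℝ) (hα : 0 < α) (hα1 : α ≤ 1) (hM : 0 ≤ M)
    (x xD : ℝ → E)
    (hx : ∀ s t, 0 ≤ s → s ≤ t → t ≤ 1 → dist (x s) (x t) ≤ M * (t - s) ^ α)
    (n : ℕ) (hn : 0 < n) (tt : Fin (n + 1) → ℝ)
    (h0 : tt 0 = 0) (h1 : tt (Fin.last n) = 1)
    (hmono : ∀ i : Fin n, tt i.castSucc < tt i.succ)
    -- xD agrees with x at the points of the dissection
    (hagree : ∀ i : Fin (n + 1), xD (tt i) = x (tt i))
    -- on each [t_i, t_{i+1}], xD is the geodesic from x_{t_i} to x_{t_{i+1}}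
    -- run at constant speed
    (hgeo : ∀ i : Fin n, ∀ u v, tt i.castSucc ≤ u → u ≤ v → v ≤ tt i.succ →
      dist (xD u) (xD v) =
        ((v - u) / (tt i.succ - tt i.castSucc)) *
          dist (x (tt i.castSucc)) (x (tt i.succ))) :
    ∀ s t, 0 ≤ s → s ≤ t → t ≤ 1 → dist (xD s) (xD t) ≤ 3 * M * (t - s) ^ α := by
  intro s t hs hst ht
  have hsm : StrictMono tt := Fin.strictMono_iff_lt_succ.mpr hmono
  have htt0 : ∀ k : Fin (n + 1), 0 ≤ tt k := fun k => h0 ▸ hsm.monotone (Fin.zero_le k)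
  have htt1 : ∀ k : Fin (n + 1), tt k ≤ 1 := fun k => h1 ▸ hsm.monotone (Fin.le_last k)
  -- within-interval Hölder bound
  have key : ∀ i : Fin n, ∀ u v, tt i.castSucc ≤ u → u ≤ v → v ≤ tt i.succ →
      dist (xD u) (xD v) ≤ M * (v - u) ^ α := by
    intro i u v hu huv hv
    rw [hgeo i u v hu huv hv]
    set Δ := tt i.succ - tt i.castSucc with hΔ
    have hΔpos : 0 < Δ := sub_pos.mpr (hmono i)
    have hdist : dist (x (tt i.castSucc)) (x (tt i.succ)) ≤ M * Δ ^ α :=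
      hx _ _ (htt0 _) (le_of_lt (hmono i)) (htt1 _)
    rcases eq_or_lt_of_le huv with h | h
    · subst h
      simp [Real.zero_rpow (ne_of_gt hα)]
    · have hvu : 0 < v - u := sub_pos.mpr h
      have hle : v - u ≤ Δ := by simp only [hΔ]; linarith
      have hexp : Δ ^ (α - 1) ≤ (v - u) ^ (α - 1) :=
        Real.rpow_le_rpow_of_nonpos hvu hle (by linarith)
      have hαne : 1 + (α - 1) ≠ 0 := by intro hc; exact hα.ne' (by linarith)
      have hΔα : Δ ^ α = Δ * Δ ^ (α - 1) := by
        rw [← Real.rpow_one_add' (le_of_lt hΔpos) hαne]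
        ring_nf
      have hvuα : (v - u) ^ α = (v - u) * (v - u) ^ (α - 1) := by
        rw [← Real.rpow_one_add' (le_of_lt hvu) hαne]
        ring_nf
      calc (v - u) / Δ * dist (x (tt i.castSucc)) (x (tt i.succ))
          ≤ (v - u) / Δ * (M * Δ ^ α) := by
            apply mul_le_mul_of_nonneg_left hdist
            positivity
        _ = M * ((v - u) * Δ ^ (α - 1)) := by
            rw [hΔα]; field_simp
        _ ≤ M * ((v - u) * (v - u) ^ (α - 1)) := by
            apply mul_le_mul_of_nonneg_left _ hM
            exact mul_le_mul_of_nonneg_left hexp (le_of_lt hvu)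
        _ = M * (v - u) ^ α := by rw [hvuα]
  -- locate s and t in intervals
  have hex : ∀ y : ℝ, 0 ≤ y → y ≤ 1 → ∃ m : Fin n,
      y ≤ tt m.succ ∧ tt m.castSucc ≤ y ∧ ∀ k : Fin n, y ≤ tt k.succ → m ≤ k := by
    intro y hy0 hy1
    have hne : (Finset.univ.filter fun k : Fin n => y ≤ tt k.succ).Nonempty := by
      refine ⟨⟨n - 1, by omega⟩, ?_⟩
      simp only [Finset.mem_filter, Finset.mem_univ, true_and]
      have : (⟨n - 1, by omega⟩ : Fin n).succ = Fin.last n := by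
        ext; simp; omega
      rw [this, h1]; exact hy1
    set F := Finset.univ.filter fun k : Fin n => y ≤ tt k.succ with hF
    refine ⟨F.min' hne, ?_, ?_, ?_⟩
    · have := F.min'_mem hne
      simp only [hF, Finset.mem_filter, Finset.mem_univ, true_and] at this
      exact this
    · set m := F.min' hne with hm
      rcases Nat.eq_zero_or_pos m.val with h | h
      · have : m.castSucc = 0 := by ext; simpa using h
        rw [this, h0]; exact hy0
      · set k : Fin n := ⟨m.val - 1, by omega⟩ with hk
        have hkm : k < m := by simp [hk, Fin.lt_def]; omega
        have hknot : k ∉ F := fun hmem => absurd (F.min'_le k hmem) (not_le.mpr hkm)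
        have hnk : ¬ (y ≤ tt k.succ) := by
          intro hyk
          exact hknot (by simp [hF, hyk])
        have hks : k.succ = m.castSucc := by ext; simp [hk]; omega
        rw [← hks]; linarith
    · intro k hk
      exact F.min'_le k (by simp [hF, hk])
  obtain ⟨i, his, hislow, himin⟩ := hex s hs (le_trans hst ht)
  obtain ⟨j, hjt, hjtlow, _⟩ := hex t (le_trans hs hst) ht
  have hij : i ≤ j := himin j (le_trans hst hjt)
  -- rpow monotonicity helper
  have hpow : ∀ a : ℝ, 0 ≤ a → a ≤ t - s → M * a ^ α ≤ M * (t - s) ^ α := by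
    intro a ha hats
    exact mul_le_mul_of_nonneg_left (Real.rpow_le_rpow ha hats (le_of_lt hα)) hM
  have hts0 : (0:ℝ) ≤ (t - s) ^ α := Real.rpow_nonneg (by linarith) α
  rcases eq_or_lt_of_le hij with h | h
  · -- same interval
    subst h
    have := key i s t hislow hst hjt
    have h2 : M * (t - s) ^ α ≤ 3 * M * (t - s) ^ α := by nlinarith
    linarith
  · -- different intervals
    have hsucc_le : tt i.succ ≤ tt j.castSucc := by
      apply hsm.monotone
      simp only [Fin.le_def, Fin.val_succ, Fin.coe_castSucc]
      exact h
    have hb1 : dist (xD s) (xD (tt i.succ)) ≤ M * (t - s) ^ α := by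
      refine le_trans (key i s (tt i.succ) hislow his le_rfl) (hpow _ (by linarith) ?_)
      have : tt i.succ ≤ t := le_trans hsucc_le hjtlow
      linarith
    have hb2 : dist (xD (tt i.succ)) (xD (tt j.castSucc)) ≤ M * (t - s) ^ α := by
      rw [hagree, hagree]
      refine le_trans (hx _ _ (htt0 _) hsucc_le (htt1 _)) (hpow _ (by linarith) ?_)
      linarith
    have hb3 : dist (xD (tt j.castSucc)) (xD t) ≤ M * (t - s) ^ α := by
      refine le_trans (key j (tt j.castSucc) t le_rfl hjtlow hjt) (hpow _ (by linarith) ?_)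
      have : s ≤ tt j.castSucc := le_trans his hsucc_le
      linarith
    have htri := dist_triangle4 (xD s) (xD (tt i.succ)) (xD (tt j.castSucc)) (xD t)
    have : (3:ℝ) * M * (t - s) ^ α = M * (t-s)^α + M * (t-s)^α + M * (t-s)^α := by ring
    linarith
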